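/- Monotone scaling of the Horseshoe marginal likelihood in the global scale: Let m(y,τ) = ∫_ℝ φ(y−μ) π(μ|τ) dμ = ∫₀^∞ (2π(1+λ²τ²))^{−1/2} exp(−y²/(2(1+λ²τ²))) · (2/π)(1+λ²)^{−1} dλ. Then for all τ₁ ≥ τ₂ > 0 and every y ∈ ℝ, m(y,τ₁) ≤ (τ₁/τ₂) · m(y,τ₂); equivalently, the map τ ↦ m(y,τ)/τ is nonincreasing on (0,∞). -/
import Mathlib


open MeasureTheory
open scoped Classical

/-- Density of `N(0,s)`. -/
noncomputable def gauss (s x : ℝ) : ℝ :=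
  (Real.sqrt (2 * Real.pi * s))⁻¹ * Real.exp (-x ^ 2 / (2 * s))

/-- Univariate Horseshoe prior density with global scale `τ`. -/
noncomputable def hs (τ θ : ℝ) : ℝ :=
  ∫ l in Set.Ioi (0 : ℝ), gauss (l ^ 2 * τ ^ 2) θ * ((2 / Real.pi) * (1 + l ^ 2)⁻¹)

/-- Horseshoe marginal likelihood `m(y,τ)`. -/
noncomputable def marg (y τ : ℝ) : ℝ :=
  ∫ μ : ℝ, gauss 1 (y - μ) * hs τ μ

lemma gauss_nonneg (s x : ℝ) : 0 ≤ gauss s x := by unfold gauss; positivity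

lemma gauss_one_le_one (x : ℝ) : gauss 1 x ≤ 1 := by
  unfold gauss
  have h1 : (1:ℝ) ≤ Real.sqrt (2*Real.pi*1) := by
    rw [show (2*Real.pi*1 : ℝ) = 2*Real.pi by ring, show (1:ℝ) = Real.sqrt 1 by simp]
    exact Real.sqrt_le_sqrt (by nlinarith [Real.pi_gt_three])
  have h2 : (Real.sqrt (2*Real.pi*1))⁻¹ ≤ 1 := inv_le_one_of_one_le₀ h1
  have h3 : Real.exp (-x^2/(2*1)) ≤ 1 := Real.exp_le_one_iff.mpr (by nlinarith [sq_nonneg x])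
  exact mul_le_one₀ h2 (Real.exp_nonneg _) h3

lemma measurable_gauss_comp {α : Type*} [MeasurableSpace α] {f g : α → ℝ}
    (hf : Measurable f) (hg : Measurable g) : Measurable (fun a => gauss (f a) (g a)) := by
  unfold gauss
  exact ((Real.continuous_sqrt.measurable.comp ((measurable_const.mul hf))).inv).mul
    (Real.measurable_exp.comp (((hg.pow_const 2).neg).div (measurable_const.mul hf)))

lemma exp_neg_le_inv_sqrt {t : ℝ} (ht : 0 < t) : Real.exp (-t) ≤ (Real.sqrt (2*t))⁻¹ := by
  have h2t : (0:ℝ) < 2*t := by linarith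
  rw [← Real.sqrt_inv]
  rw [show Real.exp (-t) = Real.sqrt (Real.exp (-t) ^ 2) from
    (Real.sqrt_sq (Real.exp_nonneg _)).symm]
  apply Real.sqrt_le_sqrt
  have he : Real.exp (-t) ^ 2 = Real.exp (-(2*t)) := by
    rw [← Real.exp_nat_mul]; norm_num
  rw [he, Real.exp_neg]
  exact inv_anti₀ h2t (by linarith [Real.add_one_le_exp (2*t)])

lemma gauss_le_inv_abs {s x : ℝ} (hsp : 0 < s) (hx : x ≠ 0) : gauss s x ≤ |x|⁻¹ := by
  unfold gauss
  have hx2 : (0:ℝ) < x^2 := by positivity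
  have ht : 0 < x^2/(2*s) := by positivity
  have hsqs : 0 < Real.sqrt (2*Real.pi*s) := Real.sqrt_pos.mpr (by positivity)
  have h1 : Real.exp (-x^2/(2*s)) ≤ (Real.sqrt (x^2/s))⁻¹ := by
    have h2 : (2:ℝ)*(x^2/(2*s)) = x^2/s := by field_simp
    rw [show -x^2/(2*s) = -(x^2/(2*s)) by ring]
    simpa [h2] using exp_neg_le_inv_sqrt ht
  have hsq : Real.sqrt (x^2/s) = |x| / Real.sqrt s := by
    rw [Real.sqrt_div (sq_nonneg x), Real.sqrt_sq_eq_abs]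
  have key : (Real.sqrt (2*Real.pi*s))⁻¹ * Real.sqrt s ≤ 1 := by
    rw [inv_mul_le_iff₀ hsqs, mul_one]
    exact Real.sqrt_le_sqrt (by nlinarith [Real.pi_gt_three])
  calc (Real.sqrt (2*Real.pi*s))⁻¹ * Real.exp (-x^2/(2*s))
      ≤ (Real.sqrt (2*Real.pi*s))⁻¹ * (Real.sqrt (x^2/s))⁻¹ :=
        mul_le_mul_of_nonneg_left h1 (by positivity)
    _ = ((Real.sqrt (2*Real.pi*s))⁻¹ * Real.sqrt s) * |x|⁻¹ := by
        rw [hsq, inv_div]; ring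
    _ ≤ 1 * |x|⁻¹ := mul_le_mul_of_nonneg_right key (by positivity)
    _ = |x|⁻¹ := one_mul _

lemma integrable_gauss {s : ℝ} (hsp : 0 < s) : Integrable (gauss s) := by
  have h : gauss s = fun x => (Real.sqrt (2*Real.pi*s))⁻¹ * Real.exp (-(2*s)⁻¹ * x^2) := by
    funext x; unfold gauss; congr 1; congr 1; field_simp
  rw [h]
  exact (integrable_exp_neg_mul_sq (by positivity)).const_mul _

lemma integral_gauss {s : ℝ} (hsp : 0 < s) : ∫ x, gauss s x = 1 := by
  unfold gauss
  rw [MeasureTheory.integral_const_mul]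
  have h : (∫ x : ℝ, Real.exp (-x^2/(2*s))) = Real.sqrt (2*Real.pi*s) := by
    have h0 : ∀ x : ℝ, Real.exp (-x^2/(2*s)) = Real.exp (-(2*s)⁻¹ * x^2) := by
      intro x; congr 1; field_simp
    simp_rw [h0, integral_gaussian]
    congr 1; field_simp
  rw [h, inv_mul_cancel₀ (ne_of_gt (Real.sqrt_pos.mpr (by positivity)))]

lemma hs_nonneg (τ θ : ℝ) : 0 ≤ hs τ θ :=
  integral_nonneg fun l => mul_nonneg (gauss_nonneg _ _) (by positivity)

lemma hs_scale {τ₁ τ₂ : ℝ} (h2 : 0 < τ₂) (h12 : τ₂ ≤ τ₁) {x : ℝ} (hx : x ≠ 0) :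
    hs τ₁ x ≤ (τ₁/τ₂) * hs τ₂ x := by
  have h1 : 0 < τ₁ := lt_of_lt_of_le h2 h12
  set c := τ₁/τ₂ with hc
  have hc0 : 0 < c := by positivity
  have hc1 : 1 ≤ c := (one_le_div h2).mpr h12
  have h := integral_comp_mul_left_Ioi
    (fun u => gauss (u^2*τ₂^2) x * ((2/Real.pi)*(1+u^2)⁻¹)) 0 hc0
  simp only [mul_zero, smul_eq_mul] at h
  have hcov : hs τ₂ x =
      c * ∫ l in Set.Ioi (0:ℝ), gauss ((c*l)^2*τ₂^2) x * ((2/Real.pi)*(1+(c*l)^2)⁻¹) := by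
    rw [h, ← mul_assoc, mul_inv_cancel₀ hc0.ne', one_mul, hs]
  rw [hcov, ← mul_assoc, ← MeasureTheory.integral_const_mul, hs]
  have hle : ∀ l : ℝ, 0 < l →
      gauss (l^2*τ₁^2) x * ((2/Real.pi)*(1+l^2)⁻¹)
        ≤ c*c*(gauss ((c*l)^2*τ₂^2) x * ((2/Real.pi)*(1+(c*l)^2)⁻¹)) := by
    intro l _
    have harg : (c*l)^2*τ₂^2 = l^2*τ₁^2 := by
      rw [hc]; field_simp
    have hinner : (2/Real.pi)*(1+l^2)⁻¹ ≤ c*c*((2/Real.pi)*(1+(c*l)^2)⁻¹) := by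
      have e1 : c*c*((2/Real.pi)*(1+(c*l)^2)⁻¹) = (2/Real.pi) * ((c^2)⁻¹ + l^2)⁻¹ := by
        field_simp
      rw [e1]
      apply mul_le_mul_of_nonneg_left _ (by positivity)
      apply inv_anti₀ (by positivity)
      have : (c^2)⁻¹ ≤ 1 := by
        rw [inv_le_one_iff₀]; right; nlinarith
      linarith
    calc gauss (l^2*τ₁^2) x * ((2/Real.pi)*(1+l^2)⁻¹)
        ≤ gauss (l^2*τ₁^2) x * (c*c*((2/Real.pi)*(1+(c*l)^2)⁻¹)) :=
          mul_le_mul_of_nonneg_left hinner (gauss_nonneg _ _)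
      _ = c*c*(gauss ((c*l)^2*τ₂^2) x * ((2/Real.pi)*(1+(c*l)^2)⁻¹)) := by rw [harg]; ring
  have hint : IntegrableOn
      (fun l => c*c*(gauss ((c*l)^2*τ₂^2) x * ((2/Real.pi)*(1+(c*l)^2)⁻¹))) (Set.Ioi 0) := by
    apply Integrable.mono'
      (g := fun l => c*c*(|x|⁻¹*((2/Real.pi)*(1+l^2)⁻¹)))
      ((((integrable_inv_one_add_sq.const_mul
        (2/Real.pi)).const_mul |x|⁻¹).const_mul (c*c)).restrict)
    · exact (((measurable_gauss_comp (((measurable_id.const_mul c).pow_const 2).mul_const _)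
        measurable_const).mul
        (((measurable_const.add
          ((measurable_id.const_mul c).pow_const 2)).inv).const_mul _)).const_mul
        (c*c)).aestronglyMeasurable
    · filter_upwards [ae_restrict_mem measurableSet_Ioi] with l hl
      have hl0 : (0:ℝ) < l := hl
      have hgl : gauss ((c*l)^2*τ₂^2) x ≤ |x|⁻¹ := gauss_le_inv_abs (by positivity) hx
      have hinv : (1+(c*l)^2)⁻¹ ≤ (1+l^2)⁻¹ := by
        apply inv_anti₀ (by positivity)
        have hcc : 1 ≤ c*c := by nlinarith
        nlinarith [mul_le_mul_of_nonneg_right hcc (sq_nonneg l)]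
      rw [Real.norm_eq_abs, abs_of_nonneg
        (mul_nonneg (by positivity) (mul_nonneg (gauss_nonneg _ _) (by positivity)))]
      gcongr
  apply integral_mono_of_nonneg
  · exact Filter.Eventually.of_forall fun l => mul_nonneg (gauss_nonneg _ _) (by positivity)
  · exact hint
  · filter_upwards [ae_restrict_mem measurableSet_Ioi] with l hl using hle l hl

lemma integrable_marg_integrand {τ : ℝ} (hτ : 0 < τ) (y : ℝ) :
    Integrable (fun μ => gauss 1 (y - μ) * hs τ μ) := by
  set F : ℝ × ℝ → ℝ :=
    fun p => gauss 1 (y - p.1) * (gauss (p.2^2*τ^2) p.1 * ((2/Real.pi)*(1+p.2^2)⁻¹)) with hF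
  have hFmeas : Measurable F := by
    have h1 : Measurable (fun p : ℝ×ℝ => gauss 1 (y - p.1)) :=
      measurable_gauss_comp measurable_const (measurable_const.sub measurable_fst)
    have h2 : Measurable (fun p : ℝ×ℝ => gauss (p.2^2*τ^2) p.1) :=
      measurable_gauss_comp ((measurable_snd.pow_const 2).mul_const _) measurable_fst
    have h3 : Measurable (fun p : ℝ×ℝ => (2/Real.pi)*(1+p.2^2)⁻¹) :=
      (((measurable_const.add (measurable_snd.pow_const 2))).inv).const_mul _
    exact h1.mul (h2.mul h3)
  have hFnn : ∀ p, 0 ≤ F p := fun p =>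
    mul_nonneg (gauss_nonneg _ _) (mul_nonneg (gauss_nonneg _ _) (by positivity))
  have hFint : Integrable F (volume.prod (volume.restrict (Set.Ioi 0))) := by
    refine ⟨hFmeas.aestronglyMeasurable,
      (hasFiniteIntegral_iff_ofReal (Filter.Eventually.of_forall hFnn)).mpr ?_⟩
    rw [lintegral_prod_symm _ hFmeas.ennreal_ofReal.aemeasurable]
    have hb : ∀ᵐ l ∂(volume.restrict (Set.Ioi (0:ℝ))),
        (∫⁻ μ, ENNReal.ofReal (F (μ, l))) ≤ ENNReal.ofReal ((2/Real.pi)*(1+l^2)⁻¹) := by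
      filter_upwards [ae_restrict_mem measurableSet_Ioi] with l hl
      have hl0 : (0:ℝ) < l := hl
      have hsl : 0 < l^2*τ^2 := by positivity
      have hmg : Measurable (fun μ : ℝ => ENNReal.ofReal (gauss (l^2*τ^2) μ)) :=
        (measurable_gauss_comp measurable_const measurable_id).ennreal_ofReal
      calc ∫⁻ μ, ENNReal.ofReal (F (μ, l))
          ≤ ∫⁻ μ, ENNReal.ofReal (gauss (l^2*τ^2) μ)
              * ENNReal.ofReal ((2/Real.pi)*(1+l^2)⁻¹) := by
            apply lintegral_mono; intro μ
            dsimp only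
            rw [← ENNReal.ofReal_mul (gauss_nonneg _ _)]
            apply ENNReal.ofReal_le_ofReal
            calc F (μ, l) ≤ 1 * (gauss (l^2*τ^2) μ * ((2/Real.pi)*(1+l^2)⁻¹)) :=
                mul_le_mul_of_nonneg_right (gauss_one_le_one _)
                  (mul_nonneg (gauss_nonneg _ _) (by positivity))
              _ = gauss (l^2*τ^2) μ * ((2/Real.pi)*(1+l^2)⁻¹) := one_mul _
        _ = (∫⁻ μ, ENNReal.ofReal (gauss (l^2*τ^2) μ))
              * ENNReal.ofReal ((2/Real.pi)*(1+l^2)⁻¹) :=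
            lintegral_mul_const'' _ hmg.aemeasurable
        _ = ENNReal.ofReal 1 * ENNReal.ofReal ((2/Real.pi)*(1+l^2)⁻¹) := by
            rw [← ofReal_integral_eq_lintegral_ofReal (integrable_gauss hsl)
              (Filter.Eventually.of_forall (gauss_nonneg _)), integral_gauss hsl]
        _ = ENNReal.ofReal ((2/Real.pi)*(1+l^2)⁻¹) := by rw [ENNReal.ofReal_one, one_mul]
    calc ∫⁻ l in Set.Ioi (0:ℝ), ∫⁻ μ, ENNReal.ofReal (F (μ, l))
        ≤ ∫⁻ l in Set.Ioi (0:ℝ), ENNReal.ofReal ((2/Real.pi)*(1+l^2)⁻¹) := lintegral_mono_ae hb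
      _ ≤ ∫⁻ l, ENNReal.ofReal ((2/Real.pi)*(1+l^2)⁻¹) :=
          lintegral_mono' Measure.restrict_le_self le_rfl
      _ < ⊤ := (integrable_inv_one_add_sq.const_mul _).lintegral_lt_top
  have hres := hFint.integral_prod_left
  have heq : (fun μ => gauss 1 (y - μ) * hs τ μ)
      = fun μ => ∫ l in Set.Ioi (0:ℝ), F (μ, l) := by
    funext μ
    rw [hs, hF]
    exact (MeasureTheory.integral_const_mul _ _).symm
  rw [heq]
  exact hres

lemma marg_scale : ∀ τ₁ τ₂ : ℝ, 0 < τ₂ → τ₂ ≤ τ₁ → ∀ y : ℝ,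
    marg y τ₁ ≤ τ₁ / τ₂ * marg y τ₂ := by
  intro τ₁ τ₂ h2 h12 y
  have hne : ∀ᵐ μ : ℝ, μ ≠ (0:ℝ) := by
    rw [ae_iff]
    simp only [ne_eq, not_not, Set.setOf_eq_eq_singleton]
    exact measure_singleton 0
  rw [marg, marg, ← MeasureTheory.integral_const_mul]
  apply integral_mono_of_nonneg
  · exact Filter.Eventually.of_forall fun μ => mul_nonneg (gauss_nonneg _ _) (hs_nonneg _ _)
  · exact (integrable_marg_integrand h2 y).const_mul _
  · filter_upwards [hne] with μ hμ
    calc gauss 1 (y-μ) * hs τ₁ μ ≤ gauss 1 (y-μ) * ((τ₁/τ₂) * hs τ₂ μ) :=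
        mul_le_mul_of_nonneg_left (hs_scale h2 h12 hμ) (gauss_nonneg _ _)
      _ = (τ₁/τ₂) * (gauss 1 (y-μ) * hs τ₂ μ) := by ring

/-- Monotone scaling of the Horseshoe marginal likelihood in the global scale. -/
theorem horseshoe_marginal_monotone_scaling :
    (∀ τ₁ τ₂ : ℝ, 0 < τ₂ → τ₂ ≤ τ₁ → ∀ y : ℝ,
      marg y τ₁ ≤ τ₁ / τ₂ * marg y τ₂) ∧
    ∀ y : ℝ, AntitoneOn (fun τ => marg y τ / τ) (Set.Ioi (0 : ℝ)) := by
  refine ⟨marg_scale, ?_⟩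
  intro y a ha b hb hab
  simp only [Set.mem_Ioi] at ha hb
  have h := marg_scale b a ha hab y
  have ha' : a ≠ 0 := ha.ne'
  show marg y b / b ≤ marg y a / a
  rw [div_le_div_iff₀ hb ha]
  calc marg y b * a ≤ (b/a * marg y a) * a := mul_le_mul_of_nonneg_right h ha.le
    _ = marg y a * b := by field_simp
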